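/- In the two-task setting with X₂ = N − X₁, the steady-state variance relation obtained from setting dE[X₁²]/dt = 0 gives 2(k₁₂+k₂₁)Var(X₁) = k₁₂E[X₁*] + k₂₁(N − E[X₁*]) − 2β E[X₁(N−X₁)]*, so that for fixed mean E[X₁*], the steady-state variance is a strictly decreasing function of β (while the rates remain nonnegative). -/
import Mathlib


/-- Two-task steady-state variance relation. Let `m = E[X₁]*`, and for a
parameter `β` let `s β` be the stationary second moment `E[X₁²]*`. Setting
`dE[X₁]/dt = 0` and `dE[X₁²]/dt = 0` gives
`2(k₁₂+k₂₁)Var(X₁) = k₁₂ E[X₁]* + k₂₁(N − E[X₁]*) − 2β E[X₁(N−X₁)]*`,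
and for fixed mean `m` the steady-state variance is strictly decreasing in
`β` while the rates remain nonnegative. -/
theorem two_task_stationary_variance (k12 k21 N m : ℝ)
    (hk12 : 0 < k12) (hk21 : 0 < k21) (hN : 1 < N) (hm : 0 < m)
    (hmean : k21 * (N - m) - k12 * m = 0) :
    -- (1) the steady-state variance relation:
    (∀ β s : ℝ,
      2 * (k21 * N * m - (k12 + k21) * s)
          + k12 * m + k21 * (N - m) - 2 * β * (N * m - s) = 0 →
      2 * (k12 + k21) * (s - m ^ 2) =
        k12 * m + k21 * (N - m) - 2 * β * (N * m - s)) ∧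
    -- (2) for fixed mean, the stationary variance strictly decreases in `β`
    --     (while the rates remain nonnegative):
    (∀ β β' s s' : ℝ, 0 ≤ β → β < β' → β' * N ≤ min k12 k21 →
      2 * (k21 * N * m - (k12 + k21) * s)
          + k12 * m + k21 * (N - m) - 2 * β * (N * m - s) = 0 →
      2 * (k21 * N * m - (k12 + k21) * s')
          + k12 * m + k21 * (N - m) - 2 * β' * (N * m - s') = 0 →
      s' - m ^ 2 < s - m ^ 2) := by
  have hNm : 0 < N - m := by nlinarith
  constructor
  · intro β s h
    linear_combination -h + 2 * m * hmean
  · intro β β' s s' hβ hββ' hβN h1 h2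
    have hβ'k : β' * N ≤ k21 := le_trans hβN (min_le_right _ _)
    have hβ'pos : 0 < β' := lt_of_le_of_lt hβ hββ'
    have hβ'k21 : β' < k21 := by nlinarith
    have hd' : 0 < k12 + k21 - β' := by linarith
    have hd : 0 < k12 + k21 - β := by linarith
    have e1 : (k12 + k21 - β) * (s - m ^ 2) = k12 * m - β * m * (N - m) := by
      linear_combination -h1 / 2 + (m + 1 / 2) * hmean
    have e2 : (k12 + k21 - β') * (s' - m ^ 2) = k12 * m - β' * m * (N - m) := by
      linear_combination -h2 / 2 + (m + 1 / 2) * hmean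
    have hs : s - m ^ 2 = (k12 * m - β * m * (N - m)) / (k12 + k21 - β) := by
      field_simp
      linarith [e1]
    have hs' : s' - m ^ 2 = (k12 * m - β' * m * (N - m)) / (k12 + k21 - β') := by
      field_simp
      linarith [e2]
    rw [hs, hs', div_lt_div_iff₀ hd' hd]
    have key : (k12 * m - β * m * (N - m)) * (k12 + k21 - β')
        - (k12 * m - β' * m * (N - m)) * (k12 + k21 - β)
        = (β' - β) * (k21 * (N - m) * (N - 1)) := by
      linear_combination (β' - β) * (1 - N + m) * hmean
    have hpos : 0 < (β' - β) * (k21 * (N - m) * (N - 1)) :=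
      mul_pos (sub_pos.2 hββ') (mul_pos (mul_pos hk21 hNm) (sub_pos.2 hN))
    linarith [key, hpos]
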